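/- arXiv:2009.01461 — 2 statements merged into one kernel-verified Lean document; each statement's English description precedes it below -/
import Mathlib

section
/- Let k ≥ 1 be a natural number. For every x ∈ [-1,1], Σ_{i=-k}^{k} |x - i/k| · g_1(k·x - i) = (2/k) · (k·x - ⌊k·x⌋) · (1 - (k·x - ⌊k·x⌋)), and consequently Σ_{i=-k}^{k} |x - i/k| · g_1(k·x - i) ≤ 1/(2k), where ⌊·⌋ denotes the floor function. -/
/-- The tent function `g₁(x) = max{1 - |x|, 0}`. -/
noncomputable def g1 (x : ℝ) : ℝ := max (1 - |x|) 0

/-! Writing `y = k x`, the `i`-th term is `|y - i| g₁(y - i) / k`, and `g₁(y - i)` vanishes unless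
`i` is one of the two integers `⌊y⌋`, `⌊y⌋ + 1` adjacent to `y`. With `t = y - ⌊y⌋` these two terms
are `t (1 - t)` and `(1 - t) t`, and both neighbours lie in `[-k, k]` whenever `|y| ≤ k`
(when `y = k` the right one does not, but then `t = 0`). Finally `t (1 - t) ≤ 1/4`. -/

open Finset

lemma g1_eq_zero_of_one_le_abs {x : ℝ} (hx : 1 ≤ |x|) : g1 x = 0 :=
  max_eq_right (by linarith)

lemma g1_of_abs_le_one {x : ℝ} (hx : |x| ≤ 1) : g1 x = 1 - |x| :=
  max_eq_left (by linarith)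

lemma eq_floor_or_eq_floor_add_one_of_abs_sub_lt_one {y : ℝ} {i : ℤ} (h : |y - i| < 1) :
    i = ⌊y⌋ ∨ i = ⌊y⌋ + 1 := by
  obtain ⟨hlo, hhi⟩ := abs_sub_lt_iff.mp h
  have hfloor : ⌊y⌋ ≤ i := Int.floor_le_iff.mpr (by linarith)
  have hceil : i < ⌊y⌋ + 2 := by
    have := Int.lt_floor_add_one y
    exact_mod_cast (show (i : ℝ) < ⌊y⌋ + 2 by linarith)
  omega

lemma support_abs_sub_mul_g1_subset (y : ℝ) :
    Function.support (fun i : ℤ => |y - i| * g1 (y - i)) ⊆ {i | |y - i| < 1} := by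
  intro i hi
  by_contra hlt
  exact hi (show |y - i| * g1 (y - i) = 0 by
    rw [g1_eq_zero_of_one_le_abs (not_lt.mp hlt), mul_zero])

theorem finsum_abs_sub_mul_g1 (y : ℝ) :
    ∑ᶠ i : ℤ, |y - i| * g1 (y - i) = 2 * Int.fract y * (1 - Int.fract y) := by
  have hsupp : Function.support (fun i : ℤ => |y - i| * g1 (y - i)) ⊆
      ({⌊y⌋, ⌊y⌋ + 1} : Finset ℤ) :=
    fun i hi => by
      simpa using eq_floor_or_eq_floor_add_one_of_abs_sub_lt_one
        (support_abs_sub_mul_g1_subset y hi)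
  rw [finsum_eq_finsetSum_of_support_subset _ hsupp, sum_pair (by omega)]
  have ht0 := Int.fract_nonneg y
  have ht1 := Int.fract_lt_one y
  have hleft : y - ⌊y⌋ = Int.fract y := Int.self_sub_floor y
  have hright : y - ((⌊y⌋ + 1 : ℤ) : ℝ) = -(1 - Int.fract y) := by
    push_cast; rw [← hleft]; ring
  have habs_left : |Int.fract y| = Int.fract y := abs_of_nonneg ht0
  have habs_right : |-(1 - Int.fract y)| = 1 - Int.fract y := by
    rw [abs_neg, abs_of_nonneg (by linarith)]
  rw [hleft, hright, g1_of_abs_le_one (by rw [habs_left]; linarith),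
    g1_of_abs_le_one (by rw [habs_right]; linarith), habs_left, habs_right]
  ring

theorem sum_abs_sub_mul_g1_Icc (k : ℕ) {y : ℝ} (hy : |y| ≤ k) :
    ∑ i ∈ Icc (-(k : ℤ)) k, |y - i| * g1 (y - i) = 2 * Int.fract y * (1 - Int.fract y) := by
  have hsupp : Function.support (fun i : ℤ => |y - i| * g1 (y - i)) ⊆
      (Icc (-(k : ℤ)) k : Set ℤ) := by
    intro i hi
    have hnear : |y - i| < 1 := support_abs_sub_mul_g1_subset y hi
    obtain ⟨hlo, hhi⟩ := abs_sub_lt_iff.mp hnear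
    obtain ⟨hylo, hyhi⟩ := abs_le.mp hy
    have hilo : -(k : ℤ) - 1 < i := by exact_mod_cast (show -(k : ℝ) - 1 < i by linarith)
    have hihi : i < (k : ℤ) + 1 := by exact_mod_cast (show (i : ℝ) < k + 1 by linarith)
    simp only [coe_Icc, Set.mem_Icc]
    omega
  rw [← finsum_eq_finsetSum_of_support_subset _ hsupp, finsum_abs_sub_mul_g1]

lemma mul_one_sub_le_one_fourth (t : ℝ) : t * (1 - t) ≤ 1 / 4 := by
  nlinarith [sq_nonneg (t - 1 / 2)]

lemma abs_sub_div_mul_g1 {k : ℝ} (hk : k ≠ 0) (x : ℝ) (i : ℤ) :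
    |x - i / k| * g1 (k * x - i) = |k * x - i| * g1 (k * x - i) / |k| := by
  rw [show k * x - i = k * (x - i / k) by field_simp, abs_mul]
  field_simp [abs_ne_zero.mpr hk]

/-- **Base case (equation (4)) of Lemma 5.** For `x ∈ [-1,1]`,
`∑_{i=-k}^{k} |x - i/k| g₁(kx - i) = (2/k)(kx - ⌊kx⌋)(1 - (kx - ⌊kx⌋)) ≤ 1/(2k)`. -/
theorem g1_moment_estimate (k : ℕ) (hk : 1 ≤ k)
    (x : ℝ) (hx : x ∈ Set.Icc (-1 : ℝ) 1) :
    (∑ i ∈ Finset.Icc (-(k : ℤ)) k, |x - (i : ℝ) / k| * g1 (k * x - i)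
      = 2 / k * ((k : ℝ) * x - ⌊(k : ℝ) * x⌋) * (1 - ((k : ℝ) * x - ⌊(k : ℝ) * x⌋))) ∧
    ∑ i ∈ Finset.Icc (-(k : ℤ)) k, |x - (i : ℝ) / k| * g1 (k * x - i) ≤ 1 / (2 * k) := by
  have hk0 : (0 : ℝ) < k := by exact_mod_cast hk
  have hkx : |(k : ℝ) * x| ≤ k := by
    rw [abs_mul, Nat.abs_cast]
    exact mul_le_of_le_one_right hk0.le (abs_le.mpr hx)
  have hsum : ∑ i ∈ Icc (-(k : ℤ)) k, |x - (i : ℝ) / k| * g1 (k * x - i)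
      = 2 / k * (Int.fract ((k : ℝ) * x) * (1 - Int.fract ((k : ℝ) * x))) := by
    simp only [abs_sub_div_mul_g1 hk0.ne', Nat.abs_cast]
    rw [← sum_div, sum_abs_sub_mul_g1_Icc k hkx]
    ring
  rw [Int.self_sub_floor, hsum]
  refine ⟨by ring, ?_⟩
  calc 2 / k * (Int.fract ((k : ℝ) * x) * (1 - Int.fract ((k : ℝ) * x)))
      ≤ 2 / k * (1 / 4) := by gcongr; exact mul_one_sub_le_one_fourth _
    _ = 1 / (2 * k) := by field_simp; norm_num
end

section
/- Let r ≥ 2 and m ≥ 1 be natural numbers. There exists a function Mult : ℝ^r → ℝ realized by a ReLU network with (m+5)·⌈log₂ r⌉ hidden layers, each of width at most 6r (i.e. Mult = W_{L+1} ∘ σ ∘ W_L ∘ σ ∘ ⋯ ∘ σ ∘ W_1 for affine maps W_1 : ℝ^r → ℝ^{6r}, W_2, …, W_L : ℝ^{6r} → ℝ^{6r}, W_{L+1} : ℝ^{6r} → ℝ with L = (m+5)·⌈log₂ r⌉, where σ is applied componentwise), such that |Mult(x) - Π_{j=1}^r x_j| ≤ 3^r · 2^{-m} for all x = (x_1,…,x_r)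 ∈ [0,1]^r. -/
/-!
Yarotsky's sawtooth construction. On `[0, 1]` the hat function `hat x = 2 min(x, 1 - x)` satisfies
`x (1 - x) = (hat x + hat x (1 - hat x)) / 4`, so `x² = x - ∑_{k ≥ 1} hat^[k] x / 4^k`, and the
partial sum `sqApprox s` is within `4^{-(s+1)}` of `x²`. A width-4 ReLU network pushes the pair
`(hat^[k] x, sqApprox k x)` forward by one layer per step. Two numbers `a, b ∈ [0, 1]` are then
multiplied through `ab = ((a + b) / 2)² - (|a - b| / 2)²`, clipped below at `0`; the result stays in
`[0, 1]`, so a balanced binary tree of depth `⌈log₂ r⌉` of these multipliers, padded with identity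
layers `x = relu x - relu (-x)`, multiplies `r` numbers with additive errors: `(r - 1) 4^{-(m+1)}`.
-/

/-- The ReLU function `σ(x) = max{x, 0}`. -/
noncomputable def relu (x : ℝ) : ℝ := max x 0

/-- `RealizedByReluNet n₀ ws F` means the scalar-valued function `F : ℝ^{n₀} → ℝ` is exactly
a ReLU network with hidden layers of widths given by the list `ws`:
`F = W_{L+1} ∘ σ ∘ W_L ∘ ⋯ ∘ σ ∘ W_1` with affine maps `W_i` (given by a matrix and a bias
vector) and the ReLU `σ` applied componentwise. -/
def RealizedByReluNet : (n0 : ℕ) → List ℕ → ((Fin n0 → ℝ) → ℝ) → Prop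
  | n0, [], F => ∃ (a : Fin n0 → ℝ) (b : ℝ), ∀ x, F x = ∑ j, a j * x j + b
  | n0, w :: ws, F => ∃ (A : Matrix (Fin w) (Fin n0) ℝ) (b : Fin w → ℝ)
      (G : (Fin w → ℝ) → ℝ), RealizedByReluNet w ws G ∧
      ∀ x, F x = G (fun i => relu (A.mulVec x i + b i))

open Matrix Set

theorem relu_nonneg (x : ℝ) : 0 ≤ relu x := le_max_right x 0

theorem abs_relu_sub_le {x y : ℝ} (hy : 0 ≤ y) : |relu x - y| ≤ |x - y| := by
  have h := abs_max_sub_max_le_abs x y 0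
  rwa [max_eq_left hy] at h

theorem relu_of_nonneg {x : ℝ} (h : 0 ≤ x) : relu x = x := max_eq_left h

theorem relu_of_nonpos {x : ℝ} (h : x ≤ 0) : relu x = 0 := max_eq_right h

theorem relu_sub_relu_neg (x : ℝ) : relu x - relu (-x) = x := max_zero_sub_max_neg_zero_eq_self x

theorem relu_add_relu_neg (x : ℝ) : relu x + relu (-x) = |x| :=
  max_zero_add_max_neg_zero_eq_abs_self x

/-- Unlike `RealizedByReluNet`, the hidden layers may be indexed by any finite types of size at
most `W`, so that networks can be run side by side on `Sum` types. -/
def IsReluNet (W : ℕ) : ℕ → {ι κ : Type} → [Fintype ι] → ((ι → ℝ) → κ → ℝ) → Prop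
  | 0, ι, κ, _, F => ∃ (A : Matrix κ ι ℝ) (b : κ → ℝ), F = fun x => A *ᵥ x + b
  | d + 1, ι, κ, _, F => ∃ (η : Type) (_ : Fintype η) (A : Matrix η ι ℝ) (b : η → ℝ)
      (G : (η → ℝ) → κ → ℝ), Fintype.card η ≤ W ∧ IsReluNet W d G ∧
      F = fun x => G fun l => relu ((A *ᵥ x + b) l)

namespace IsReluNet

variable {W d e : ℕ} {ι ι' κ μ : Type} [Fintype ι] [Fintype ι']

theorem mono_width {F : (ι → ℝ) → κ → ℝ} {W' : ℕ} (h : IsReluNet W d F) (hW : W ≤ W') :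
    IsReluNet W' d F := by
  induction d generalizing ι with
  | zero => exact h
  | succ d ih =>
    obtain ⟨η, _, A, b, G, hη, hG, rfl⟩ := h
    exact ⟨η, _, A, b, G, hη.trans hW, ih hG, rfl⟩

theorem comp_affine {G : (ι → ℝ) → κ → ℝ} (h : IsReluNet W d G) (B : Matrix ι ι' ℝ)
    (c : ι → ℝ) : IsReluNet W d fun x => G (B *ᵥ x + c) := by
  cases d with
  | zero =>
    obtain ⟨A, b, rfl⟩ := h
    refine ⟨A * B, A *ᵥ c + b, funext fun x => ?_⟩
    simp only [mulVec_add, mulVec_mulVec, add_assoc]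
  | succ d =>
    obtain ⟨η, _, A, b, G, hη, hG, rfl⟩ := h
    refine ⟨η, _, A * B, A *ᵥ c + b, G, hη, hG, funext fun x => ?_⟩
    simp only [mulVec_add, mulVec_mulVec, add_assoc]

theorem comp {F : (ι' → ℝ) → ι → ℝ} {G : (ι → ℝ) → κ → ℝ} (hF : IsReluNet W d F)
    (hG : IsReluNet W e G) : IsReluNet W (d + e) (G ∘ F) := by
  induction d generalizing ι' with
  | zero =>
    obtain ⟨B, c, rfl⟩ := hF
    rw [Nat.zero_add]
    exact hG.comp_affine B c
  | succ d ih =>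
    obtain ⟨η, _, A, b, F, hη, hF, rfl⟩ := hF
    rw [Nat.succ_add]
    exact ⟨η, _, A, b, G ∘ F, hη, ih hF, rfl⟩

theorem sumElim {F₁ : (ι → ℝ) → κ → ℝ} {F₂ : (ι' → ℝ) → μ → ℝ} {W₁ W₂ : ℕ}
    (h₁ : IsReluNet W₁ d F₁) (h₂ : IsReluNet W₂ d F₂) :
    IsReluNet (W₁ + W₂) d fun x => Sum.elim (F₁ (x ∘ Sum.inl)) (F₂ (x ∘ Sum.inr)) := by
  induction d generalizing ι ι' with
  | zero =>
    obtain ⟨A₁, b₁, rfl⟩ := h₁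
    obtain ⟨A₂, b₂, rfl⟩ := h₂
    refine ⟨fromBlocks A₁ 0 0 A₂, Sum.elim b₁ b₂, funext fun x => ?_⟩
    ext (i | i) <;> simp [fromBlocks_mulVec]
  | succ d ih =>
    obtain ⟨η₁, _, A₁, b₁, G₁, hη₁, hG₁, rfl⟩ := h₁
    obtain ⟨η₂, _, A₂, b₂, G₂, hη₂, hG₂, rfl⟩ := h₂
    refine ⟨η₁ ⊕ η₂, _, fromBlocks A₁ 0 0 A₂, Sum.elim b₁ b₂, _, ?_, ih hG₁ hG₂,
      funext fun x => ?_⟩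
    · rw [Fintype.card_sum]; omega
    · have hlayer : (fun l => relu ((fromBlocks A₁ 0 0 A₂ *ᵥ x + Sum.elim b₁ b₂) l)) =
          Sum.elim (fun l => relu ((A₁ *ᵥ (x ∘ Sum.inl) + b₁) l))
            (fun l => relu ((A₂ *ᵥ (x ∘ Sum.inr) + b₂) l)) := by
        ext (l | l) <;> simp [fromBlocks_mulVec]
      rw [hlayer]
      rfl

end IsReluNet

section

variable {ι κ : Type} [Fintype ι] {W : ℕ}

theorem isReluNet_linearMap [DecidableEq ι] (L : (ι → ℝ) →ₗ[ℝ] κ → ℝ) :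
    IsReluNet W 0 L :=
  ⟨LinearMap.toMatrix' L, 0, funext fun x => by simp⟩

theorem isReluNet_relu [DecidableEq ι] :
    IsReluNet (Fintype.card ι) 1 fun (x : ι → ℝ) i => relu (x i) :=
  ⟨ι, _, 1, 0, id, le_rfl, ⟨1, 0, funext fun y => by simp⟩, funext fun x => by simp⟩

theorem isReluNet_id_one [Fintype κ] [DecidableEq κ] :
    IsReluNet (2 * Fintype.card κ) 1 (id : (κ → ℝ) → κ → ℝ) := by
  refine ⟨κ ⊕ κ, inferInstance, fromRows 1 (-1), 0, fun y => fromCols 1 (-1) *ᵥ y,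
    by simp [two_mul], ⟨fromCols 1 (-1), 0, funext fun y => by simp⟩, funext fun x => ?_⟩
  ext i
  simp [fromRows_mulVec, fromCols_mulVec, neg_mulVec, Function.comp_def, ← sub_eq_add_neg,
    relu_sub_relu_neg]

theorem isReluNet_id [Fintype κ] [DecidableEq κ] :
    ∀ e, IsReluNet (2 * Fintype.card κ) (e + 1) (id : (κ → ℝ) → κ → ℝ)
  | 0 => isReluNet_id_one
  | e + 1 => (isReluNet_id e).comp isReluNet_id_one

end

namespace IsReluNet

variable {W d : ℕ} {ι ι' κ : Type} [Fintype ι] [Fintype ι']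

theorem comp_funLeft {G : (ι → ℝ) → κ → ℝ} [DecidableEq ι'] (h : IsReluNet W d G)
    (σ : ι → ι') : IsReluNet W d fun x => G (x ∘ σ) := by
  have h' := (isReluNet_linearMap (W := W) (LinearMap.funLeft ℝ ℝ σ)).comp h
  rw [Nat.zero_add] at h'
  exact h'

theorem mono_depth [Fintype κ] [DecidableEq κ] {F : (ι → ℝ) → κ → ℝ} {D : ℕ}
    (h : IsReluNet W d F) (hdD : d ≤ D) (hW : 2 * Fintype.card κ ≤ W) : IsReluNet W D F := by
  obtain ⟨_ | e, rfl⟩ := Nat.exists_eq_add_of_le hdD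
  · exact h
  · exact h.comp ((isReluNet_id e).mono_width hW)

theorem realizedByReluNet {n : ℕ} {F : (Fin n → ℝ) → κ → ℝ} (h : IsReluNet W d F)
    (k : κ) : RealizedByReluNet n (List.replicate d W) fun x => F x k := by
  induction d generalizing n F with
  | zero =>
    obtain ⟨A, b, rfl⟩ := h
    exact ⟨A k, b k, fun x => by simp [mulVec, dotProduct]⟩
  | succ d ih =>
    obtain ⟨η, _, A, b, G, hη, hG, rfl⟩ := h
    -- the layer is embedded into `Fin W`; the extra units get zero weights and are ignored
    obtain ⟨e⟩ := Function.Embedding.nonempty_of_card_le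
      (hη.trans_eq (Fintype.card_fin W).symm)
    refine ⟨Function.extend e A 0, Function.extend e b 0, fun y => G (y ∘ e) k,
      ih (hG.comp_funLeft e), fun x => ?_⟩
    have hA : ∀ l, Function.extend e A 0 (e l) = A l := e.injective.extend_apply A 0
    simp [mulVec, hA, e.injective.extend_apply, Function.comp_def]

end IsReluNet

noncomputable def hat (x : ℝ) : ℝ := 2 * relu x - 4 * relu (x - 1 / 2) + 2 * relu (x - 1)

section Hat

variable {x : ℝ}

theorem hat_of_le_half (h₀ : 0 ≤ x) (h : x ≤ 1 / 2) : hat x = 2 * x := by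
  rw [hat, relu_of_nonneg h₀, relu_of_nonpos (by linarith), relu_of_nonpos (by linarith)]
  ring

theorem hat_of_half_le (h : 1 / 2 ≤ x) (h₁ : x ≤ 1) : hat x = 2 - 2 * x := by
  rw [hat, relu_of_nonneg (by linarith), relu_of_nonneg (by linarith),
    relu_of_nonpos (by linarith)]
  ring

theorem mapsTo_hat : MapsTo hat (Icc 0 1) (Icc 0 1) := fun x ⟨h₀, h₁⟩ => by
  rcases le_total x (1 / 2) with h | h
  · rw [hat_of_le_half h₀ h]; constructor <;> linarith
  · rw [hat_of_half_le h h₁]; constructor <;> linarith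

theorem mul_one_sub_eq_hat (hx : x ∈ Icc 0 1) :
    x * (1 - x) = (hat x + hat x * (1 - hat x)) / 4 := by
  rcases le_total x (1 / 2) with h | h
  · rw [hat_of_le_half hx.1 h]; ring
  · rw [hat_of_half_le h hx.2]; ring

end Hat

noncomputable def sqApprox (s : ℕ) (x : ℝ) : ℝ :=
  x - ∑ k ∈ Finset.range s, hat^[k + 1] x / 4 ^ (k + 1)

theorem sqApprox_succ (s : ℕ) (x : ℝ) :
    sqApprox (s + 1) x = sqApprox s x - hat^[s + 1] x / 4 ^ (s + 1) := by
  simp only [sqApprox, Finset.sum_range_succ]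
  ring

section SqApprox

variable {x : ℝ}

theorem sqApprox_eq (hx : x ∈ Icc 0 1) (s : ℕ) :
    sqApprox s x = x ^ 2 + hat^[s] x * (1 - hat^[s] x) / 4 ^ s := by
  induction s with
  | zero => simp [sqApprox]; ring
  | succ s ih =>
    rw [sqApprox_succ, ih, mul_one_sub_eq_hat (mapsTo_hat.iterate s hx),
      Function.iterate_succ_apply']
    field_simp
    ring

theorem sqApprox_le_self (hx : x ∈ Icc 0 1) (s : ℕ) : sqApprox s x ≤ x := by
  have hterm (k : ℕ) : 0 ≤ hat^[k + 1] x / 4 ^ (k + 1) :=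
    div_nonneg (mapsTo_hat.iterate (k + 1) hx).1 (by positivity)
  simpa [sqApprox] using Finset.sum_nonneg fun k _ => hterm k

theorem sqApprox_mem_Icc (hx : x ∈ Icc 0 1) (s : ℕ) :
    sqApprox s x ∈ Icc (x ^ 2) (x ^ 2 + 1 / 4 ^ (s + 1)) := by
  obtain ⟨hv₀, hv₁⟩ := mapsTo_hat.iterate s hx
  have hv : hat^[s] x * (1 - hat^[s] x) ∈ Icc 0 (1 / 4) :=
    ⟨mul_nonneg hv₀ (by linarith), by nlinarith [sq_nonneg (hat^[s] x - 1 / 2)]⟩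
  rw [sqApprox_eq hx, pow_succ' (4 : ℝ) s, ← div_div]
  constructor
  · have := div_nonneg hv.1 (by positivity : (0 : ℝ) ≤ 4 ^ s)
    linarith
  · gcongr
    exact hv.2

end SqApprox

theorem add_div_two_mem_Icc {a b : ℝ} (ha : a ∈ Icc 0 1) (hb : b ∈ Icc 0 1) :
    (a + b) / 2 ∈ Icc (0 : ℝ) 1 :=
  ⟨by linarith [ha.1, hb.1], by linarith [ha.2, hb.2]⟩

theorem abs_sub_div_two_mem_Icc {a b : ℝ} (ha : a ∈ Icc 0 1) (hb : b ∈ Icc 0 1) :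
    |a - b| / 2 ∈ Icc (0 : ℝ) 1 := by
  have h : |a - b| ≤ 1 := abs_sub_le_iff.2 ⟨by linarith [ha.2, hb.1], by linarith [ha.1, hb.2]⟩
  exact ⟨by positivity, by linarith⟩

noncomputable def mulApprox (s : ℕ) (a b : ℝ) : ℝ :=
  relu (sqApprox s ((a + b) / 2) - sqApprox s (|a - b| / 2))

theorem mulApprox_spec {a b : ℝ} (ha : a ∈ Icc 0 1) (hb : b ∈ Icc 0 1) (s : ℕ) :
    mulApprox s a b ∈ Icc 0 1 ∧ |mulApprox s a b - a * b| ≤ 1 / 4 ^ (s + 1) := by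
  obtain ⟨hp₀, hp₁⟩ := sqApprox_mem_Icc (add_div_two_mem_Icc ha hb) s
  obtain ⟨hq₀, hq₁⟩ := sqApprox_mem_Icc (abs_sub_div_two_mem_Icc ha hb) s
  have hp_le := sqApprox_le_self (add_div_two_mem_Icc ha hb) s
  have hab : ((a + b) / 2) ^ 2 - (|a - b| / 2) ^ 2 = a * b := by
    rw [div_pow, div_pow, sq_abs]
    ring
  refine ⟨⟨relu_nonneg _, max_le ?_ zero_le_one⟩,
    (abs_relu_sub_le (mul_nonneg ha.1 hb.1)).trans (abs_sub_le_iff.2 ⟨?_, ?_⟩)⟩ <;>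
    linarith [sq_nonneg (|a - b| / 2), ha.2, hb.2]

theorem abs_mul_sub_mul_le {a b c d : ℝ} (hb : |b| ≤ 1) (hc : |c| ≤ 1) :
    |a * b - c * d| ≤ |a - c| + |b - d| :=
  calc |a * b - c * d| = |(a - c) * b + c * (b - d)| := by ring_nf
    _ ≤ |a - c| * |b| + |c| * |b - d| := by
      rw [← abs_mul, ← abs_mul]
      exact abs_add_le _ _
    _ ≤ |a - c| + |b - d| :=
      add_le_add (mul_le_of_le_one_right (abs_nonneg _) hb)
        (mul_le_of_le_one_left (abs_nonneg _) hc)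

def IsProdApprox {ι : Type} [Fintype ι] (ε : ℝ) (F : (ι → ℝ) → Fin 1 → ℝ) : Prop :=
  ∀ x : ι → ℝ, (∀ j, x j ∈ Icc 0 1) → F x 0 ∈ Icc 0 1 ∧ |F x 0 - ∏ j, x j| ≤ ε

namespace IsProdApprox

variable {ι ι' : Type} [Fintype ι] [Fintype ι'] {ε : ℝ} {F : (ι → ℝ) → Fin 1 → ℝ}

theorem mono {ε' : ℝ} (h : IsProdApprox ε F) (hε : ε ≤ ε') : IsProdApprox ε' F :=
  fun x hx => ⟨(h x hx).1, (h x hx).2.trans hε⟩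

theorem comp_equiv (h : IsProdApprox ε F) (e : ι ≃ ι') :
    IsProdApprox ε fun x => F (x ∘ e) := fun x hx => by
  simpa only [Function.comp_apply, e.prod_comp] using h (x ∘ e) fun j => hx (e j)

theorem comp_sumElim {ε₁ ε₂ : ℝ} {P : (Fin 1 ⊕ Fin 1 → ℝ) → Fin 1 → ℝ}
    {F₁ : (ι → ℝ) → Fin 1 → ℝ} {F₂ : (ι' → ℝ) → Fin 1 → ℝ} (hP : IsProdApprox ε P)
    (h₁ : IsProdApprox ε₁ F₁) (h₂ : IsProdApprox ε₂ F₂) :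
    IsProdApprox (ε + (ε₁ + ε₂)) fun x =>
      P (Sum.elim (F₁ (x ∘ Sum.inl)) (F₂ (x ∘ Sum.inr))) := by
  intro x hx
  obtain ⟨hy₁, herr₁⟩ := h₁ (x ∘ Sum.inl) fun j => hx _
  obtain ⟨hy₂, herr₂⟩ := h₂ (x ∘ Sum.inr) fun j => hx _
  have hy : ∀ i, Sum.elim (F₁ (x ∘ Sum.inl)) (F₂ (x ∘ Sum.inr)) i ∈ Icc 0 1 := by
    rintro (i | i) <;> rw [Fin.fin_one_eq_zero i]
    exacts [hy₁, hy₂]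
  obtain ⟨hP₁, hP₂⟩ := hP _ hy
  have hprod₁ : ∏ j, (x ∘ Sum.inl) j ∈ Icc 0 1 := unitInterval.prod_mem fun j _ => hx _
  simp only [Fintype.prod_sum_type, Fin.prod_univ_one, Sum.elim_inl, Sum.elim_inr] at hP₂
  refine ⟨hP₁, ?_⟩
  rw [Fintype.prod_sum_type]
  exact (abs_sub_le _ (F₁ (x ∘ Sum.inl) 0 * F₂ (x ∘ Sum.inr) 0) _).trans <| add_le_add hP₂ <|
    (abs_mul_sub_mul_le ((abs_of_nonneg hy₂.1).trans_le hy₂.2)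
      ((abs_of_nonneg hprod₁.1).trans_le hprod₁.2)).trans (add_le_add herr₁ herr₂)

end IsProdApprox

theorem exists_isReluNet_sawStep (k : ℕ) :
    ∃ N : (Fin 2 → ℝ) → Fin 2 → ℝ, IsReluNet 4 1 N ∧
      ∀ v t, 0 ≤ t → N ![v, t] = ![hat v, t - hat v / 4 ^ k] := by
  let C : Matrix (Fin 2) (Fin 4) ℝ := !![2, -4, 2, 0; -2 / 4 ^ k, 4 / 4 ^ k, -2 / 4 ^ k, 1]
  refine ⟨_, ⟨Fin 4, inferInstance, !![1, 0; 1, 0; 1, 0; 0, 1], ![0, -2⁻¹, -1, 0],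
    fun y => C *ᵥ y, by simp, ⟨C, 0, funext fun y => by simp⟩, rfl⟩, fun v t ht => ?_⟩
  ext i
  fin_cases i <;>
    simp [C, hat, mulVec, dotProduct, Fin.sum_univ_succ, relu_of_nonneg ht, sub_eq_add_neg] <;> ring

theorem exists_isReluNet_sqApprox_iterate (s : ℕ) :
    ∃ N : (Fin 1 → ℝ) → Fin 2 → ℝ, IsReluNet 4 s N ∧
      ∀ x : Fin 1 → ℝ, x 0 ∈ Icc 0 1 → N x = ![hat^[s] (x 0), sqApprox s (x 0)] := by
  induction s with
  | zero =>
    refine ⟨_, isReluNet_linearMap (LinearMap.funLeft ℝ ℝ ![0, 0]), fun x _ => ?_⟩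
    ext i
    fin_cases i <;> simp [sqApprox]
  | succ s ih =>
    obtain ⟨N, hN, hNx⟩ := ih
    obtain ⟨T, hT, hTx⟩ := exists_isReluNet_sawStep (s + 1)
    refine ⟨T ∘ N, hN.comp hT, fun x hx => ?_⟩
    have hnonneg : 0 ≤ sqApprox s (x 0) := (sq_nonneg _).trans (sqApprox_mem_Icc hx s).1
    rw [Function.comp_apply, hNx x hx, hTx _ _ hnonneg, sqApprox_succ,
      Function.iterate_succ_apply']

theorem exists_isReluNet_sqApprox (s : ℕ) :
    ∃ S : (Fin 1 → ℝ) → Fin 1 → ℝ, IsReluNet 4 s S ∧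
      ∀ x : Fin 1 → ℝ, x 0 ∈ Icc 0 1 → S x 0 = sqApprox s (x 0) := by
  obtain ⟨N, hN, hNx⟩ := exists_isReluNet_sqApprox_iterate s
  refine ⟨_, hN.comp (isReluNet_linearMap (LinearMap.funLeft ℝ ℝ ![1])), fun x hx => ?_⟩
  simp [LinearMap.funLeft, hNx x hx]

theorem exists_isReluNet_halfSum_halfAbsSub :
    ∃ N : (Fin 1 ⊕ Fin 1 → ℝ) → Fin 1 ⊕ Fin 1 → ℝ, IsReluNet 3 1 N ∧
      ∀ w : Fin 1 ⊕ Fin 1 → ℝ, 0 ≤ w (.inl 0) + w (.inr 0) →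
        N w = Sum.elim ![(w (.inl 0) + w (.inr 0)) / 2] ![|w (.inl 0) - w (.inr 0)| / 2] := by
  let C : Matrix (Fin 1 ⊕ Fin 1) (Fin 3) ℝ := fromRows !![1, 0, 0] !![0, 1, 1]
  let A : Matrix (Fin 3) (Fin 1 ⊕ Fin 1) ℝ :=
    fromCols !![1 / 2; 1 / 2; -1 / 2] !![1 / 2; -1 / 2; 1 / 2]
  refine ⟨_, ⟨Fin 3, inferInstance, A, 0, fun y => C *ᵥ y, by simp,
    ⟨C, 0, funext fun y => by simp⟩, rfl⟩, fun w hw => ?_⟩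
  ext (i | i) <;> fin_cases i <;>
    simp [A, C, fromCols_mulVec, mulVec, dotProduct, Fin.sum_univ_succ]
  · rw [relu_of_nonneg (by linarith)]
    ring
  · have h := relu_add_relu_neg ((w (.inl 0) - w (.inr 0)) / 2)
    rw [abs_div, abs_two] at h
    convert h using 3 <;> ring

theorem exists_isReluNet_mul (s : ℕ) :
    ∃ P : (Fin 1 ⊕ Fin 1 → ℝ) → Fin 1 → ℝ, IsReluNet 8 (s + 5) P ∧
      IsProdApprox (1 / 4 ^ (s + 1)) P := by
  obtain ⟨N, hN, hNw⟩ := exists_isReluNet_halfSum_halfAbsSub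
  obtain ⟨S, hS, hSx⟩ := exists_isReluNet_sqApprox s
  have hdiff := (isReluNet_relu (ι := Fin 1)).comp_affine
    (fromCols (1 : Matrix (Fin 1) (Fin 1) ℝ) (-1 : Matrix (Fin 1) (Fin 1) ℝ)) 0
  have hP := ((hN.mono_width (by norm_num)).comp (hS.sumElim hS)).comp
    (hdiff.mono_width (by simp))
  refine ⟨_, hP.mono_depth (by omega) (by simp), fun w hw => ?_⟩
  have ha := hw (.inl 0)
  have hb := hw (.inr 0)
  simp only [Function.comp_apply, hNw w (by linarith [ha.1, hb.1]), fromCols_mulVec, one_mulVec,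
    neg_mulVec, Sum.elim_comp_inl, Sum.elim_comp_inr, ← sub_eq_add_neg, Pi.add_apply,
    Pi.sub_apply, Pi.zero_apply, add_zero, Sum.elim_inl, Sum.elim_inr, Fintype.prod_sum_type,
    Fin.prod_univ_one]
  rw [hSx _ (add_div_two_mem_Icc ha hb), hSx _ (abs_sub_div_two_mem_Icc ha hb)]
  exact mulApprox_spec ha hb s

theorem exists_isReluNet_prod (m n : ℕ) (hn : 0 < n) :
    ∃ F : (Fin n → ℝ) → Fin 1 → ℝ, IsReluNet (6 * n) ((m + 5) * Nat.clog 2 n) F ∧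
      IsProdApprox ((n - 1) / 4 ^ (m + 1)) F := by
  induction n using Nat.strong_induction_on with
  | _ n ih =>
  obtain rfl | hn₂ := (Nat.succ_le_of_lt hn).eq_or_lt
  · exact ⟨id, ⟨1, 0, funext fun x => by simp⟩, fun x hx => ⟨hx 0, by simp⟩⟩
  obtain ⟨a, b, rfl, hba, hab⟩ : ∃ a b, n = a + b ∧ b ≤ a ∧ a ≤ b + 1 :=
    ⟨(n + 1) / 2, n / 2, by omega, by omega, by omega⟩
  obtain ⟨F₁, hF₁, hF₁x⟩ := ih a (by omega) (by omega)
  obtain ⟨F₂, hF₂, hF₂x⟩ := ih b (by omega) (by omega)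
  obtain ⟨P, hP, hPx⟩ := exists_isReluNet_mul m
  have hF₂' := hF₂.mono_depth (Nat.mul_le_mul_left _ (Nat.clog_mono_right 2 hba))
    (by simp; omega)
  have hdepth : (m + 5) * Nat.clog 2 (a + b) = (m + 5) * Nat.clog 2 a + (m + 5) := by
    rw [Nat.clog_of_two_le one_lt_two hn₂, show (a + b + 2 - 1) / 2 = a by omega]
    ring
  have hF := (((hF₁.sumElim hF₂').comp_funLeft finSumFinEquiv).mono_width
    (W' := 6 * (a + b)) (by omega)).comp (hP.mono_width (by omega))
  refine ⟨_, hdepth ▸ hF,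
    ((hPx.comp_sumElim hF₁x hF₂x).comp_equiv finSumFinEquiv).mono (le_of_eq ?_)⟩
  push_cast
  ring

theorem approximate_multiplication_network_general (r m : ℕ) (hr : 2 ≤ r) :
    ∃ Mult : (Fin r → ℝ) → ℝ,
      RealizedByReluNet r (List.replicate ((m + 5) * Nat.clog 2 r) (6 * r)) Mult ∧
      ∀ x : Fin r → ℝ, (∀ j, x j ∈ Set.Icc (0 : ℝ) 1) →
        |Mult x - ∏ j, x j| ≤ 3 ^ r / 2 ^ m := by
  obtain ⟨F, hF, hFx⟩ := exists_isReluNet_prod m r (by omega)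
  refine ⟨fun x => F x 0, hF.realizedByReluNet 0, fun x hx => (hFx x hx).2.trans ?_⟩
  have hr₃ : (r : ℝ) - 1 ≤ 3 ^ r := by
    have : (r : ℝ) < 3 ^ r := by exact_mod_cast Nat.lt_pow_self (by norm_num)
    linarith
  have h₄ : (2 : ℝ) ^ m ≤ 4 ^ (m + 1) :=
    (pow_le_pow_left₀ (by norm_num) (by norm_num) m).trans
      (pow_le_pow_right₀ (by norm_num) m.le_succ)
  exact div_le_div₀ (by positivity) hr₃ (by positivity) h₄

/-- **Lemma 4 (Schmidt-Hieber, Lemma A3).** There is a ReLU network `Mult` with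
`(m+5)⌈log₂ r⌉` hidden layers, each of width `6r`, approximating the product of `r`
numbers on `[0,1]^r` with error at most `3^r · 2^{-m}`. -/
theorem approximate_multiplication_network (r m : ℕ) (hr : 2 ≤ r) (hm : 1 ≤ m) :
    ∃ Mult : (Fin r → ℝ) → ℝ,
      RealizedByReluNet r (List.replicate ((m + 5) * Nat.clog 2 r) (6 * r)) Mult ∧
      ∀ x : Fin r → ℝ, (∀ j, x j ∈ Set.Icc (0 : ℝ) 1) →
        |Mult x - ∏ j, x j| ≤ 3 ^ r / 2 ^ m :=
  approximate_multiplication_network_general r m hr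
end
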